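/- arXiv:1005.3910 — 3 statements merged into one kernel-verified Lean document; each statement's English description precedes it below -/
import Mathlib

section
/- Let $a_{per}, c_{per} : \mathbb{R} \to \mathbb{R}$ be measurable 1-periodic functions with $0 < \alpha \le a_{per}(x) \le \beta$ and $0 < \alpha \le a_{per}(x) + c_{per}(x) \le \beta$ for a.e. $x$. Define $a_\eta^* = \left( (1-\eta)\int_{-1/2}^{1/2} \frac{1}{a_{per}} + \eta \int_{-1/2}^{1/2} \frac{1}{a_{per}+c_{per}} \right)^{-1}$ and $a_{per}^* = \left(\int_{-1/2}^{1/2} \frac{1}{a_{per}}\right)^{-1}$. Then as $\eta \to 0$, $a_\eta^* = a_{per}^* + \eta\, (a_{per}^*)^2 \int_{-1/2}^{1/2} \frac{c_{per}}{a_{per}(a_{per}+c_{per})} + \eta^2 (a_{per}^*)^3 \left(\int_{-1/2}^{1/2} \frac{c_{per}}{a_{per}(a_{per}+c_{per})}\right)^2 + O(\eta^3)$. -/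
/-!
With `A = ∫ a⁻¹`, `B = ∫ (a + c)⁻¹` and `C = ∫ c / (a (a + c)) = A - B`, the homogenized
coefficient is `((1 - η) A + η B)⁻¹ = (A - η C)⁻¹`, a geometric series in `η C / A`. Its
remainder after the quadratic term is exactly `η³ C³ / (A³ (A - η C))`, which is `O(η³)`
because `A > 0`.
-/

open MeasureTheory Filter Asymptotics Topology

section Algebra

variable {A B : ℝ}

theorem inv_lineMap_sub_taylor_two (hA : A ≠ 0) {η : ℝ} (hD : (1 - η) * A + η * B ≠ 0) :
    ((1 - η) * A + η * B)⁻¹ - (A⁻¹ + η * (A⁻¹) ^ 2 * (A - B) + η ^ 2 * (A⁻¹) ^ 3 * (A - B) ^ 2)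
      = η ^ 3 * ((A - B) ^ 3 / (A ^ 3 * ((1 - η) * A + η * B))) := by
  field_simp
  ring

theorem isBigO_inv_lineMap_sub_taylor_two (hA : A ≠ 0) :
    (fun η : ℝ => ((1 - η) * A + η * B)⁻¹
        - (A⁻¹ + η * (A⁻¹) ^ 2 * (A - B) + η ^ 2 * (A⁻¹) ^ 3 * (A - B) ^ 2))
      =O[𝓝 0] fun η => η ^ 3 := by
  have hD : Tendsto (fun η : ℝ => (1 - η) * A + η * B) (𝓝 0) (𝓝 A) := by
    simpa using (by fun_prop : Continuous fun η : ℝ => (1 - η) * A + η * B).tendsto 0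
  have hRemainder : Tendsto (fun η => (A - B) ^ 3 / (A ^ 3 * ((1 - η) * A + η * B))) (𝓝 0)
      (𝓝 ((A - B) ^ 3 / (A ^ 3 * A))) :=
    tendsto_const_nhds.div (tendsto_const_nhds.mul hD) (by positivity)
  have hEq : (fun η : ℝ => η ^ 3 * ((A - B) ^ 3 / (A ^ 3 * ((1 - η) * A + η * B))))
      =ᶠ[𝓝 0] fun η => ((1 - η) * A + η * B)⁻¹
        - (A⁻¹ + η * (A⁻¹) ^ 2 * (A - B) + η ^ 2 * (A⁻¹) ^ 3 * (A - B) ^ 2) := by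
    filter_upwards [hD.eventually_ne hA] with η hη
    exact (inv_lineMap_sub_taylor_two hA hη).symm
  simpa using ((isBigO_refl (fun η : ℝ => η ^ 3) _).mul (hRemainder.isBigO_one ℝ)).congr' hEq
    EventuallyEq.rfl

end Algebra

section Integrals

variable {f c : ℝ → ℝ} {a b α β : ℝ}

theorem intervalIntegrable_inv_of_ae_le (hα : 0 < α) (hf : Measurable f)
    (hle : ∀ᵐ x, α ≤ f x) : IntervalIntegrable (fun x => (f x)⁻¹) volume a b := by
  refine (intervalIntegrable_const (c := α⁻¹)).mono_fun' hf.inv.aestronglyMeasurable ?_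
  filter_upwards [ae_restrict_of_ae hle] with x hx
  rw [Real.norm_eq_abs, abs_inv, abs_of_pos (hα.trans_le hx)]
  exact inv_anti₀ hα hx

theorem integral_inv_pos_of_ae_mem_Icc (hab : a < b) (hα : 0 < α) (hf : Measurable f)
    (hbound : ∀ᵐ x, α ≤ f x ∧ f x ≤ β) : 0 < ∫ x in a..b, (f x)⁻¹ := by
  obtain ⟨x₀, hx₀⟩ := hbound.exists
  have hβ : 0 < β := hα.trans_le (hx₀.1.trans hx₀.2)
  calc 0 < (b - a) * β⁻¹ := by have := sub_pos.2 hab; positivity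
    _ = ∫ _ in a..b, β⁻¹ := by simp
    _ ≤ ∫ x in a..b, (f x)⁻¹ := by
      refine intervalIntegral.integral_mono_ae hab.le intervalIntegrable_const
        (intervalIntegrable_inv_of_ae_le hα hf (hbound.mono fun _ hx => hx.1)) ?_
      filter_upwards [hbound] with x hx
      exact inv_anti₀ (hα.trans_le hx.1) hx.2

theorem integral_div_mul_add_eq_sub
    (hf : IntervalIntegrable (fun x => (f x)⁻¹) volume a b)
    (hfc : IntervalIntegrable (fun x => (f x + c x)⁻¹) volume a b)
    (hf0 : ∀ᵐ x, f x ≠ 0) (hfc0 : ∀ᵐ x, f x + c x ≠ 0) :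
    ∫ x in a..b, c x / (f x * (f x + c x))
      = (∫ x in a..b, (f x)⁻¹) - ∫ x in a..b, (f x + c x)⁻¹ := by
  rw [← intervalIntegral.integral_sub hf hfc]
  refine intervalIntegral.integral_congr_ae ?_
  filter_upwards [hf0, hfc0] with x hx hxc _
  field_simp
  ring

end Integrals

theorem stmt_0_general (aper cper : ℝ → ℝ) (α β : ℝ) (hα : 0 < α)
    (hmeas : Measurable aper) (hmeasc : Measurable cper)
    (hbound : ∀ᵐ x : ℝ, α ≤ aper x ∧ aper x ≤ β)
    (hbound' : ∀ᵐ x : ℝ, α ≤ aper x + cper x ∧ aper x + cper x ≤ β) :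
    (fun η : ℝ =>
        ((1 - η) * (∫ x in (-(1/2) : ℝ)..(1/2), (aper x)⁻¹)
          + η * (∫ x in (-(1/2) : ℝ)..(1/2), (aper x + cper x)⁻¹))⁻¹
        - ((∫ x in (-(1/2) : ℝ)..(1/2), (aper x)⁻¹)⁻¹
          + η * ((∫ x in (-(1/2) : ℝ)..(1/2), (aper x)⁻¹)⁻¹) ^ 2
              * (∫ x in (-(1/2) : ℝ)..(1/2), cper x / (aper x * (aper x + cper x)))
          + η ^ 2 * ((∫ x in (-(1/2) : ℝ)..(1/2), (aper x)⁻¹)⁻¹) ^ 3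
              * (∫ x in (-(1/2) : ℝ)..(1/2), cper x / (aper x * (aper x + cper x))) ^ 2))
      =O[𝓝[Set.Icc (0:ℝ) 1] 0] fun η : ℝ => η ^ 3 := by
  have hA : 0 < ∫ x in (-(1/2) : ℝ)..(1/2), (aper x)⁻¹ :=
    integral_inv_pos_of_ae_mem_Icc (by norm_num) hα hmeas hbound
  have hC := integral_div_mul_add_eq_sub (a := -(1/2)) (b := 1/2)
    (intervalIntegrable_inv_of_ae_le hα hmeas (hbound.mono fun _ hx => hx.1))
    (intervalIntegrable_inv_of_ae_le hα (hmeas.add hmeasc) (hbound'.mono fun _ hx => hx.1))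
    (hbound.mono fun _ hx => (hα.trans_le hx.1).ne')
    (hbound'.mono fun _ hx => (hα.trans_le hx.1).ne')
  rw [hC]
  exact (isBigO_inv_lineMap_sub_taylor_two hA.ne').mono nhdsWithin_le_nhds

/-- One-dimensional weakly random homogenization: second-order expansion
of the homogenized coefficient `a_η^*` in the Bernoulli parameter `η`. -/
theorem stmt_0 (aper cper : ℝ → ℝ) (α β : ℝ) (hα : 0 < α)
    (hmeas : Measurable aper) (hmeasc : Measurable cper)
    (hper : ∀ x : ℝ, aper (x + 1) = aper x)
    (hperc : ∀ x : ℝ, cper (x + 1) = cper x)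
    (hbound : ∀ᵐ x : ℝ, α ≤ aper x ∧ aper x ≤ β)
    (hbound' : ∀ᵐ x : ℝ, α ≤ aper x + cper x ∧ aper x + cper x ≤ β) :
    (fun η : ℝ =>
        ((1 - η) * (∫ x in (-(1/2) : ℝ)..(1/2), (aper x)⁻¹)
          + η * (∫ x in (-(1/2) : ℝ)..(1/2), (aper x + cper x)⁻¹))⁻¹
        - ((∫ x in (-(1/2) : ℝ)..(1/2), (aper x)⁻¹)⁻¹
          + η * ((∫ x in (-(1/2) : ℝ)..(1/2), (aper x)⁻¹)⁻¹) ^ 2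
              * (∫ x in (-(1/2) : ℝ)..(1/2), cper x / (aper x * (aper x + cper x)))
          + η ^ 2 * ((∫ x in (-(1/2) : ℝ)..(1/2), (aper x)⁻¹)⁻¹) ^ 3
              * (∫ x in (-(1/2) : ℝ)..(1/2), cper x / (aper x * (aper x + cper x))) ^ 2))
      =O[𝓝[Set.Icc (0:ℝ) 1] 0] fun η : ℝ => η ^ 3 :=
  stmt_0_general aper cper α β hα hmeas hmeasc hbound hbound'
end

section
/- Let $a_{per}, c_{per}$ be as above, $a_{per}^* = (\int_{-1/2}^{1/2} a_{per}^{-1})^{-1}$, $c = \int_{-1/2}^{1/2} \frac{c_{per}}{a_{per}(a_{per}+c_{per})}$. For odd $N$ define the two-defect flux $G_N = N\left(N(a_{per}^*)^{-1} - 2c\right)^{-1}$, the one-defect flux $F_N = N\left(N(a_{per}^*)^{-1} - c\right)^{-1}$, and $a_2^{*,N} = \frac{N-1}{2}\left( N G_N - 2 N F_N + N a_{per}^* \right)$ (with $N-1$ the number of possible positions for the second defect). Then $a_2^{*,N} \to (a_{per}^*)^3 c^2$ as $N \to \infty$. -/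
/-!
With `a = a*_per`, the three fluxes combine to
`N G_N - 2 N F_N + N a = 2 a³ c² N / ((N - a c) (N - 2 a c))`, so
`a₂^{*,N} = a³ c² · N (N - 1) / ((N - a c) (N - 2 a c))`, whose rational factor tends to `1`.
The only analytic input is `a ≠ 0`: the bounds `α ≤ a_per ≤ β` make `∫ a_per⁻¹` positive.
-/

open MeasureTheory Filter Topology

theorem intervalIntegral_inv_pos_of_ae_mem_Icc {f : ℝ → ℝ} {a b α β : ℝ} (hab : a < b)
    (hα : 0 < α) (hf : Measurable f) (hbound : ∀ᵐ x, α ≤ f x ∧ f x ≤ β) :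
    0 < ∫ x in a..b, (f x)⁻¹ := by
  have hβ : 0 < β := by
    obtain ⟨x, hx⟩ := hbound.exists
    exact hα.trans_le (hx.1.trans hx.2)
  have hint : IntervalIntegrable (fun x => (f x)⁻¹) volume a b := by
    refine (intervalIntegrable_const (c := α⁻¹)).mono_fun' hf.inv.aestronglyMeasurable ?_
    filter_upwards [ae_restrict_of_ae hbound] with x hx
    rw [Real.norm_eq_abs, abs_of_pos (inv_pos.2 (hα.trans_le hx.1))]
    exact inv_anti₀ hα hx.1
  have hlower : ∀ᵐ x, β⁻¹ ≤ (f x)⁻¹ := by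
    filter_upwards [hbound] with x hx
    exact inv_anti₀ (hα.trans_le hx.1) hx.2
  calc 0 < (b - a) * β⁻¹ := by have := sub_pos.2 hab; positivity
    _ = ∫ _ in a..b, β⁻¹ := by simp
    _ ≤ ∫ x in a..b, (f x)⁻¹ :=
      intervalIntegral.integral_mono_ae hab.le intervalIntegrable_const hint hlower

theorem tendsto_mul_sub_one_div_sub_mul_sub (p q : ℝ) :
    Tendsto (fun N : ℝ => N * (N - 1) / ((N - p) * (N - q))) atTop (𝓝 1) := by
  have ht := tendsto_inv_atTop_zero (𝕜 := ℝ)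
  have hlim : Tendsto (fun N : ℝ => (1 - N⁻¹) / ((1 - p * N⁻¹) * (1 - q * N⁻¹))) atTop
      (𝓝 ((1 - 0) / ((1 - p * 0) * (1 - q * 0)))) :=
    (tendsto_const_nhds.sub ht).div
      ((tendsto_const_nhds.sub (ht.const_mul p)).mul (tendsto_const_nhds.sub (ht.const_mul q)))
      (by norm_num)
  norm_num at hlim
  refine hlim.congr' ?_
  filter_upwards [eventually_gt_atTop 0] with N hN
  field_simp

/-- `a₂^{*,N}` as a function of `N`. -/
noncomputable def secondOrderCorrection (astar c N : ℝ) : ℝ :=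
  (N - 1) / 2 *
    (N * (N * (N * astar⁻¹ - 2 * c)⁻¹) - 2 * (N * (N * (N * astar⁻¹ - c)⁻¹)) + N * astar)

theorem secondOrderCorrection_eq {astar c N : ℝ} (ha : astar ≠ 0) (h1 : N ≠ astar * c)
    (h2 : N ≠ 2 * astar * c) :
    secondOrderCorrection astar c N =
      astar ^ 3 * c ^ 2 * (N * (N - 1) / ((N - astar * c) * (N - 2 * astar * c))) := by
  have h1' : N - astar * c ≠ 0 := sub_ne_zero.2 h1
  have h2' : N - 2 * astar * c ≠ 0 := sub_ne_zero.2 h2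
  have e1 : N * astar⁻¹ - c = (N - astar * c) / astar := by field_simp
  have e2 : N * astar⁻¹ - 2 * c = (N - 2 * astar * c) / astar := by field_simp
  rw [secondOrderCorrection, e1, e2]
  field_simp
  ring

theorem tendsto_secondOrderCorrection {astar : ℝ} (ha : astar ≠ 0) (c : ℝ) :
    Tendsto (secondOrderCorrection astar c) atTop (𝓝 (astar ^ 3 * c ^ 2)) := by
  have h := (tendsto_mul_sub_one_div_sub_mul_sub (astar * c) (2 * astar * c)).const_mul
    (astar ^ 3 * c ^ 2)
  rw [mul_one] at h
  refine h.congr' ?_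
  filter_upwards [eventually_gt_atTop (astar * c), eventually_gt_atTop (2 * astar * c)]
    with N h1 h2
  exact (secondOrderCorrection_eq ha h1.ne' h2.ne').symm

theorem stmt_2_general (aper : ℝ → ℝ) (α β : ℝ) (hα : 0 < α)
    (hmeas : Measurable aper)
    (hbound : ∀ᵐ x : ℝ, α ≤ aper x ∧ aper x ≤ β)
    (astar c : ℝ)
    (hastar : astar = (∫ x in (-(1/2) : ℝ)..(1/2), (aper x)⁻¹)⁻¹) :
    Tendsto
      (fun k : ℕ =>
        let N : ℝ := 2 * k + 1
        let F : ℝ := N * (N * astar⁻¹ - c)⁻¹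
        let G : ℝ := N * (N * astar⁻¹ - 2 * c)⁻¹
        (N - 1) / 2 * (N * G - 2 * (N * F) + N * astar))
      atTop (𝓝 (astar ^ 3 * c ^ 2)) := by
  have hastar_pos : 0 < astar := hastar ▸ inv_pos.2
    (intervalIntegral_inv_pos_of_ae_mem_Icc (by norm_num) hα hmeas hbound)
  have hN : Tendsto (fun k : ℕ => 2 * (k : ℝ) + 1) atTop atTop :=
    tendsto_atTop_add_const_right _ 1
      (tendsto_natCast_atTop_atTop.const_mul_atTop two_pos)
  exact (tendsto_secondOrderCorrection hastar_pos.ne' c).comp hN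

/-- Convergence of the one-dimensional second-order correction `a_2^{*,N}`
(computed from the two-defect and one-defect supercell fluxes) as the odd
size `N = 2k+1 → ∞`. -/
theorem stmt_2 (aper cper : ℝ → ℝ) (α β : ℝ) (hα : 0 < α)
    (hmeas : Measurable aper) (hmeasc : Measurable cper)
    (hper : ∀ x : ℝ, aper (x + 1) = aper x)
    (hperc : ∀ x : ℝ, cper (x + 1) = cper x)
    (hbound : ∀ᵐ x : ℝ, α ≤ aper x ∧ aper x ≤ β)
    (hbound' : ∀ᵐ x : ℝ, α ≤ aper x + cper x ∧ aper x + cper x ≤ β)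
    (astar c : ℝ)
    (hastar : astar = (∫ x in (-(1/2) : ℝ)..(1/2), (aper x)⁻¹)⁻¹)
    (hc : c = ∫ x in (-(1/2) : ℝ)..(1/2), cper x / (aper x * (aper x + cper x))) :
    Tendsto
      (fun k : ℕ =>
        let N : ℝ := 2 * k + 1
        let F : ℝ := N * (N * astar⁻¹ - c)⁻¹
        let G : ℝ := N * (N * astar⁻¹ - 2 * c)⁻¹
        (N - 1) / 2 * (N * G - 2 * (N * F) + N * astar))
      atTop (𝓝 (astar ^ 3 * c ^ 2)) :=
  stmt_2_general aper α β hα hmeas hbound astar c hastar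
end

section
/- Let $a_{per}, c_{per}$ be 1-periodic, measurable, with $0 < \alpha \le a_{per}, a_{per}+c_{per} \le \beta$, and set $a_{per}^* = (\int_{-1/2}^{1/2} a_{per}^{-1})^{-1}$, $c = \int_{-1/2}^{1/2}\frac{c_{per}}{a_{per}(a_{per}+c_{per})}$. Then the one-dimensional first-order correction satisfies the explicit rate $\left| a_1^{*,N} - (a_{per}^*)^2 c \right| \le \frac{K}{N}$ for all odd $N \ge N_0$, where $a_1^{*,N} = N^2\left(N(a_{per}^*)^{-1} - c\right)^{-1} - N a_{per}^*$ and $K$ depends only on $\alpha, \beta$. -/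
open MeasureTheory Filter Topology

/-- Explicit `1/N` convergence rate for the one-dimensional first-order
correction, with constants depending only on the ellipticity bounds `α, β`. -/
theorem stmt_17 (α β : ℝ) (hα : 0 < α) (hαβ : α ≤ β) :
    ∃ K : ℝ, ∃ N₀ : ℕ,
      ∀ aper cper : ℝ → ℝ,
        Measurable aper → Measurable cper →
        (∀ x : ℝ, aper (x + 1) = aper x) →
        (∀ x : ℝ, cper (x + 1) = cper x) →
        (∀ᵐ x : ℝ, α ≤ aper x ∧ aper x ≤ β) →
        (∀ᵐ x : ℝ, α ≤ aper x + cper x ∧ aper x + cper x ≤ β) →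
        ∀ astar c : ℝ,
          astar = (∫ x in (-(1/2) : ℝ)..(1/2), (aper x)⁻¹)⁻¹ →
          c = (∫ x in (-(1/2) : ℝ)..(1/2), cper x / (aper x * (aper x + cper x))) →
          ∀ N : ℕ, Odd N → N₀ ≤ N →
            |(N : ℝ) ^ 2 * ((N : ℝ) * astar⁻¹ - c)⁻¹ - (N : ℝ) * astar - astar ^ 2 * c|
              ≤ K / N := by
  have hβ : 0 < β := lt_of_lt_of_le hα hαβ
  set C : ℝ := β / α ^ 2 with hCdef
  have hC0 : 0 < C := div_pos hβ (pow_pos hα 2)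
  refine ⟨2 * β ^ 3 * C ^ 2, ⌈2 * β * C⌉₊ + 1, ?_⟩
  intro aper cper ha hc _ _ hae hae2 astar c hastar hcdef N _ hN
  have hab : (-(1/2) : ℝ) ≤ 1/2 := by norm_num
  -- bounds on the integral of aper⁻¹
  have haeR : ∀ᵐ x ∂(volume.restrict (Set.uIoc (-(1/2):ℝ) (1/2))),
      α ≤ aper x ∧ aper x ≤ β := ae_restrict_of_ae hae
  have hbound : ∀ᵐ x ∂(volume.restrict (Set.uIoc (-(1/2):ℝ) (1/2))),
      ‖(aper x)⁻¹‖ ≤ α⁻¹ := by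
    filter_upwards [haeR] with x hx
    have h0 : 0 < aper x := lt_of_lt_of_le hα hx.1
    rw [Real.norm_eq_abs, abs_of_nonneg (inv_nonneg.2 h0.le)]
    exact inv_anti₀ hα hx.1
  haveI hfin : IsFiniteMeasure (volume.restrict (Set.uIoc (-(1/2):ℝ) (1/2))) := by
    refine ⟨?_⟩
    rw [Measure.restrict_apply_univ, Set.uIoc_of_le hab, Real.volume_Ioc]
    exact ENNReal.ofReal_lt_top
  have hinteg : IntervalIntegrable (fun x => (aper x)⁻¹) volume (-(1/2)) (1/2) := by
    rw [intervalIntegrable_iff]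
    exact (integrable_const (α⁻¹)).mono' (ha.inv.aestronglyMeasurable) hbound
  have hconstβ : IntervalIntegrable (fun _ : ℝ => β⁻¹) volume (-(1/2)) (1/2) :=
    intervalIntegrable_const
  have hconstα : IntervalIntegrable (fun _ : ℝ => α⁻¹) volume (-(1/2)) (1/2) :=
    intervalIntegrable_const
  have hIlow : β⁻¹ ≤ ∫ x in (-(1/2):ℝ)..(1/2), (aper x)⁻¹ := by
    have := intervalIntegral.integral_mono_ae_restrict hab hconstβ hinteg
      (by
        filter_upwards [ae_restrict_of_ae hae] with x hx
        have h0 : 0 < aper x := lt_of_lt_of_le hα hx.1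
        exact inv_anti₀ h0 hx.2)
    rw [intervalIntegral.integral_const] at this
    norm_num at this
    exact this
  have hIhigh : (∫ x in (-(1/2):ℝ)..(1/2), (aper x)⁻¹) ≤ α⁻¹ := by
    have := intervalIntegral.integral_mono_ae_restrict hab hinteg hconstα
      (by
        filter_upwards [ae_restrict_of_ae hae] with x hx
        exact inv_anti₀ hα hx.1)
    rw [intervalIntegral.integral_const] at this
    norm_num at this
    exact this
  have hIpos : 0 < ∫ x in (-(1/2):ℝ)..(1/2), (aper x)⁻¹ :=
    lt_of_lt_of_le (inv_pos.2 hβ) hIlow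
  have hsα : α ≤ astar := by
    rw [hastar]
    calc α = (α⁻¹)⁻¹ := by rw [inv_inv]
    _ ≤ _ := inv_anti₀ hIpos hIhigh
  have hsβ : astar ≤ β := by
    rw [hastar]
    calc (∫ x in (-(1/2):ℝ)..(1/2), (aper x)⁻¹)⁻¹ ≤ (β⁻¹)⁻¹ :=
      inv_anti₀ (inv_pos.2 hβ) hIlow
    _ = β := inv_inv β
  have hs0 : 0 < astar := lt_of_lt_of_le hα hsα
  -- bound on c
  have hcC : |c| ≤ C := by
    have key : ∀ᵐ x : ℝ, x ∈ Set.uIoc (-(1/2):ℝ) (1/2) →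
        ‖cper x / (aper x * (aper x + cper x))‖ ≤ C := by
      filter_upwards [hae, hae2] with x hx hx2
      intro _
      have h1 : 0 < aper x := lt_of_lt_of_le hα hx.1
      have h2 : 0 < aper x + cper x := lt_of_lt_of_le hα hx2.1
      have hd : α ^ 2 ≤ aper x * (aper x + cper x) := by
        rw [sq]; exact mul_le_mul hx.1 hx2.1 hα.le h1.le
      have hnum : |cper x| ≤ β := by
        have h3 : cper x = (aper x + cper x) - aper x := by ring
        rw [h3, abs_sub_le_iff]
        constructor <;> nlinarith [hx.1, hx.2, hx2.1, hx2.2]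
      rw [Real.norm_eq_abs, abs_div, abs_of_pos (mul_pos h1 h2)]
      exact div_le_div₀ hβ.le hnum (pow_pos hα 2) hd
    have := intervalIntegral.norm_integral_le_of_norm_le_const_ae key
    rw [← hcdef] at this
    norm_num at this
    exact this
  have hc2 : c ^ 2 ≤ C ^ 2 := by
    have := sq_abs c ▸ pow_le_pow_left₀ (abs_nonneg c) hcC 2
    simpa [sq_abs] using this
  -- properties of N
  have hNR : (2 * β * C) < (N : ℝ) := by
    have h1 : (⌈2 * β * C⌉₊ : ℝ) < N := by
      exact_mod_cast Nat.lt_of_lt_of_le (Nat.lt_succ_self _) hN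
    exact lt_of_le_of_lt (Nat.le_ceil _) h1
  have hN1 : (1 : ℝ) ≤ N := by
    have : 1 ≤ N := le_trans (Nat.le_add_left 1 _) hN
    exact_mod_cast this
  have hNpos : (0 : ℝ) < N := lt_of_lt_of_le one_pos hN1
  -- denominator bound : N - astar * c ≥ N / 2
  have hsc : astar * c ≤ β * C := by
    calc astar * c ≤ |astar * c| := le_abs_self _
    _ = |astar| * |c| := abs_mul _ _
    _ ≤ β * C := mul_le_mul (by rwa [abs_of_pos hs0]) hcC (abs_nonneg _) hβ.le
  have hden : (N : ℝ) / 2 ≤ (N : ℝ) - astar * c := by nlinarith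
  have hdenpos : 0 < (N : ℝ) - astar * c := lt_of_lt_of_le (by positivity) hden
  -- algebraic identity
  have hkey : (N : ℝ) ^ 2 * ((N : ℝ) * astar⁻¹ - c)⁻¹ - (N : ℝ) * astar - astar ^ 2 * c
      = astar ^ 3 * c ^ 2 / ((N : ℝ) - astar * c) := by
    have h1 : (N : ℝ) * astar⁻¹ - c = ((N : ℝ) - astar * c) / astar := by
      field_simp
    rw [h1]
    field_simp
    ring
  rw [hkey]
  have hnum_le : astar ^ 3 * c ^ 2 ≤ β ^ 3 * C ^ 2 := by
    have h1 : astar ^ 3 ≤ β ^ 3 := pow_le_pow_left₀ hs0.le hsβ 3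
    nlinarith [sq_nonneg c, pow_pos hs0 3]
  have hnum_nonneg : 0 ≤ astar ^ 3 * c ^ 2 := by positivity
  rw [abs_of_nonneg (div_nonneg hnum_nonneg hdenpos.le)]
  calc astar ^ 3 * c ^ 2 / ((N : ℝ) - astar * c)
      ≤ β ^ 3 * C ^ 2 / ((N : ℝ) / 2) := by
        exact div_le_div₀ (by positivity) hnum_le (by positivity) hden
    _ = 2 * β ^ 3 * C ^ 2 / N := by field_simp
end
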